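/- arXiv:2406.16405 — 2 statements merged into one kernel-verified Lean document; each statement's English description precedes it below -/
import Mathlib

section
/- The number of Dyck-like words of length (p+1)n with n ones, in which every prefix has at least p times as many zeros as ones, equals C((p+1)n, n)/(pn+1) (the Pfaff–Fuss–Catalan number). -/
/-!
Let `f(a, b)` count the words with `a` zeros and `b` ones all of whose prefixes satisfy the
condition. Splitting off the last letter gives Pascal's recursion
`f(a+1, b+1) = f(a, b+1) + f(a+1, b)` whenever `p(b+1) ≤ a+1`. The numbers
`C(a+b, b) - p C(a+b, a+1)` satisfy the same recursion with the same values at `b = 0`, and they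
vanish on the line `a + 1 = p b` just outside the admissible region, where `f` vanishes too.
Hence `f(a, b) = C(a+b, b) - p C(a+b, a+1)` for `p b ≤ a + 1`; at `(a, b) = (pn, n)` the identity
`(pn+1) C((p+1)n, pn+1) = n C((p+1)n, n)` turns this into `C((p+1)n, n) / (pn+1)`.
-/

def prefOK (p : ℕ) (w : List Bool) : Prop :=
  ∀ u v : List Bool, w = u ++ v → p * u.count true ≤ u.count false

theorem prefOK_iff_forall_prefix {p : ℕ} {w : List Bool} :
    prefOK p w ↔ ∀ u, u <+: w → p * u.count true ≤ u.count false :=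
  ⟨fun h u ⟨v, huv⟩ => h u v huv.symm, fun h u v huv => h u ⟨v, huv.symm⟩⟩

theorem prefOK_concat_iff {p : ℕ} {w : List Bool} {x : Bool} :
    prefOK p (w ++ [x]) ↔
      prefOK p w ∧ p * (w ++ [x]).count true ≤ (w ++ [x]).count false := by
  simp only [prefOK_iff_forall_prefix, List.prefix_concat_iff, or_imp, forall_and, forall_eq]
  exact and_comm

theorem prefOK_replicate_false (p a : ℕ) : prefOK p (List.replicate a false) := by
  rw [prefOK_iff_forall_prefix]
  intro u hu
  have : u.count true = 0 := by
    simpa [List.count_replicate] using hu.sublist.count_le true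
  simp [this]

theorem prefOK_zero (w : List Bool) : prefOK 0 w := by
  simp [prefOK]

theorem eq_replicate_of_count_not_eq_zero {w : List Bool} {x : Bool}
    (h : w.count (!x) = 0) : w = List.replicate w.length x :=
  List.eq_replicate_iff.mpr ⟨rfl, fun y hy => by
    cases x <;> cases y <;> simp_all [List.count_eq_zero]⟩

def ballotSet (p a b : ℕ) : Set (List Bool) :=
  {w | w.count false = a ∧ w.count true = b ∧ prefOK p w}

theorem ballotSet_finite (p a b : ℕ) : (ballotSet p a b).Finite :=
  (List.finite_length_eq Bool (a + b)).subset fun w ⟨hf, ht, _⟩ => by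
    rw [Set.mem_ofPred_eq, ← List.count_false_add_count_true, hf, ht]

theorem ballotSet_eq_setOf_length (p a b : ℕ) :
    ballotSet p a b = {w | w.length = a + b ∧ w.count true = b ∧ prefOK p w} := by
  ext w
  simp only [ballotSet, Set.mem_ofPred_eq, ← List.count_false_add_count_true]
  constructor <;> rintro ⟨hcount, ht, hw⟩ <;> refine ⟨?_, ht, hw⟩ <;> omega

theorem ballotSet_eq_empty {p a b : ℕ} (h : a < p * b) : ballotSet p a b = ∅ :=
  Set.eq_empty_of_forall_notMem fun w ⟨hf, ht, hw⟩ => by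
    subst hf ht
    exact h.not_ge (hw w [] (List.append_nil w).symm)

theorem ballotSet_zero_right (p a : ℕ) : ballotSet p a 0 = {List.replicate a false} := by
  ext w
  refine ⟨fun ⟨hf, ht, _⟩ => ?_, ?_⟩
  · rw [Set.mem_singleton_iff, eq_replicate_of_count_not_eq_zero (x := false) ht,
      ← List.count_false_add_count_true, hf, ht, add_zero]
  · rintro rfl
    exact ⟨by simp, by simp [List.count_replicate], prefOK_replicate_false p a⟩

theorem ballotSet_zero_zero_left (b : ℕ) : ballotSet 0 0 b = {List.replicate b true} := by
  ext w
  refine ⟨fun ⟨hf, ht, _⟩ => ?_, ?_⟩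
  · rw [Set.mem_singleton_iff, eq_replicate_of_count_not_eq_zero (x := true) hf,
      ← List.count_false_add_count_true, hf, ht, zero_add]
  · rintro rfl
    exact ⟨by simp [List.count_replicate], by simp, prefOK_zero _⟩

theorem ballotSet_succ_succ {p a b : ℕ} (h : p * (b + 1) ≤ a + 1) :
    ballotSet p (a + 1) (b + 1) =
      (· ++ [false]) '' ballotSet p a (b + 1) ∪ (· ++ [true]) '' ballotSet p (a + 1) b := by
  ext w
  rcases w.eq_nil_or_concat' with rfl | ⟨w, x, rfl⟩
  · simp [ballotSet]
  cases x <;> simp +contextual [ballotSet, prefOK_concat_iff, List.count_append, h]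

theorem ncard_ballotSet_succ_succ {p a b : ℕ} (h : p * (b + 1) ≤ a + 1) :
    (ballotSet p (a + 1) (b + 1)).ncard =
      (ballotSet p a (b + 1)).ncard + (ballotSet p (a + 1) b).ncard := by
  have hinj (x : Bool) : Function.Injective (· ++ [x] : List Bool → List Bool) :=
    fun _ _ => List.append_cancel_right
  have hdisj : Disjoint ((· ++ [false]) '' ballotSet p a (b + 1))
      ((· ++ [true]) '' ballotSet p (a + 1) b) := by
    rw [Set.disjoint_left]
    rintro _ ⟨u, -, rfl⟩ ⟨v, -, huv⟩
    simpa using (List.append_inj' huv rfl).2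
  rw [ballotSet_succ_succ h, Set.ncard_union_eq hdisj ((ballotSet_finite ..).image _)
    ((ballotSet_finite ..).image _), Set.ncard_image_of_injective _ (hinj false),
    Set.ncard_image_of_injective _ (hinj true)]

theorem mul_choose_of_mul_succ_eq {p a b : ℕ} (h : p * (b + 1) = a + 1) :
    p * (a + b + 1).choose (a + 1) = (a + b + 1).choose (b + 1) := by
  have key : (a + b + 1).choose (a + 1) * (a + 1) = (a + b + 1).choose (b + 1) * (b + 1) := by
    rw [← Nat.add_one_mul_choose_eq, Nat.choose_symm_add, add_comm a b,
      Nat.add_one_mul_choose_eq]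
  apply Nat.eq_of_mul_eq_mul_right b.succ_pos
  rw [← key, mul_right_comm, h, mul_comm]

theorem ncard_ballotSet_add_mul_choose {p a b : ℕ} (h : p * b ≤ a + 1) :
    (ballotSet p a b).ncard + p * (a + b).choose (a + 1) = (a + b).choose b := by
  induction b generalizing a with
  | zero => simp [ballotSet_zero_right]
  | succ b ihb =>
    induction a with
    | zero =>
      rcases h.eq_or_lt with hb | hb
      · rw [ballotSet_eq_empty (by omega), Set.ncard_empty, zero_add]
        exact mul_choose_of_mul_succ_eq hb
      · obtain rfl : p = 0 := by simpa using hb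
        simp [ballotSet_zero_zero_left]
    | succ a iha =>
      rcases h.eq_or_lt with hb | hb
      · rw [ballotSet_eq_empty (by omega), Set.ncard_empty, zero_add, ← add_assoc]
        exact mul_choose_of_mul_succ_eq hb
      · have hb : p * (b + 1) ≤ a + 1 := Nat.le_of_lt_succ hb
        have hfalse := iha hb
        have htrue := ihb ((Nat.mul_le_mul_left p b.le_succ).trans (hb.trans a.succ.le_succ))
        rw [ncard_ballotSet_succ_succ hb, show a + 1 + (b + 1) = a + b + 1 + 1 by ring,
          Nat.choose_succ_succ' _ (a + 1), Nat.choose_succ_succ' _ b]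
        rw [show a + 1 + b = a + b + 1 by ring] at htrue
        rw [show a + (b + 1) = a + b + 1 by ring] at hfalse
        linarith

theorem card_C_fussCatalan (n p : ℕ) :
    Nat.card {w : List Bool // w.length = (p + 1) * n ∧ w.count true = n ∧ prefOK p w} =
      ((p + 1) * n).choose n / (p * n + 1) := by
  rw [add_one_mul]
  have hcard : Nat.card {w : List Bool // w.length = p * n + n ∧ w.count true = n ∧ prefOK p w}
      = (ballotSet p (p * n) n).ncard := by
    rw [ballotSet_eq_setOf_length]
    exact Nat.card_coe_set_eq _
  have hballot := ncard_ballotSet_add_mul_choose (p * n).le_succ (b := n)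
  have hchoose : (p * n + n).choose (p * n + 1) * (p * n + 1) = (p * n + n).choose n * n := by
    rw [Nat.choose_succ_right_eq, Nat.add_sub_cancel_left, Nat.choose_symm_add]
  rw [hcard]
  refine (Nat.div_eq_of_eq_mul_left (by positivity) ?_).symm
  linear_combination p * hchoose - (p * n + 1) * hballot
end

section
/- If a list L of binary words of the same length and weight is a homogeneous Gray code (each consecutive pair differs by transposing a 1 and a 0 with no 1's between them) and is suffix partitioned (words sharing a common suffix appear consecutively), then L is recursive tail partitioned. -/
/-- Result of transposing positions `i` (a `1`) and `j` (a `0`). -/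
def applyT (w : List Bool) (i j : ℕ) : List Bool := (w.set i false).set j true

/-- `(i, j)` is a homogeneous transposition for `w`: position `i` holds a `1`,
position `j` holds a `0`, and every position strictly between them holds a `0`. -/
def okT (w : List Bool) (i j : ℕ) : Prop :=
  i < w.length ∧ j < w.length ∧ w.getD i false = true ∧ w.getD j false = false ∧
    ∀ t, min i j < t → t < max i j → w.getD t false = false

/-- Two words differ by a homogeneous transposition. -/
def homTrans (w w' : List Bool) : Prop :=
  ∃ i j, okT w i j ∧ w' = applyT w i j

/-- Words sharing a common suffix occupy consecutive positions in the list. -/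
def suffixPartitioned (L : List (List Bool)) : Prop :=
  ∀ s : List Bool, ∀ i j k : ℕ, i ≤ j → j ≤ k → k < L.length →
    s <:+ L.getD i [] → s <:+ L.getD k [] → s <:+ L.getD j []

/-- The number of trailing `1`'s of a word. -/
def trailOnes (w : List Bool) : ℕ := (w.reverse.takeWhile (· == true)).length

/-- The tail of a word: its unique suffix of the form `0 1^u`, when it exists. -/
def tail? (w : List Bool) : Option (List Bool) :=
  if false ∈ w then some (false :: List.replicate (trailOnes w) true) else none

/-- Words with shorter tails come first (among words having a tail). -/
def incTP (L : List (List Bool)) : Prop :=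
  ∀ i j : ℕ, i ≤ j → j < L.length → false ∈ L.getD i [] → false ∈ L.getD j [] →
    trailOnes (L.getD i []) ≤ trailOnes (L.getD j [])

/-- Words with longer tails come first (among words having a tail). -/
def decTP (L : List (List Bool)) : Prop :=
  ∀ i j : ℕ, i ≤ j → j < L.length → false ∈ L.getD i [] → false ∈ L.getD j [] →
    trailOnes (L.getD j []) ≤ trailOnes (L.getD i [])

/-- Recursive tail partitioned lists. -/
inductive RTP : List (List Bool) → Prop
  | nil : RTP []
  | mk (L : List (List Bool)) (h : incTP L ∨ decTP L)
      (hrec : ∀ t : List Bool,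
        RTP (((L.filter fun w => decide (tail? w = some t)).map
          fun w => w.take (w.length - t.length)))) : RTP L

/-!
A homogeneous transposition creates a `0`, can be undone by a homogeneous transposition, and
changes the number `u` of trailing ones of a word containing a `0` by at most one. Along a
homogeneous Gray code every word after the first therefore has a tail, and the tail lengths move
in unit steps. Suffix partitioning makes the words with a given tail `0 1^u` an interval of the
list, and a sequence of naturals moving in unit steps whose level sets are intervals is monotone:
this gives the tail partition. The block of words with a given tail is contiguous, so after
erasing the tail it is again a suffix partitioned homogeneous Gray code, of shorter words;
induction on the word length concludes.
-/

theorem trailOnes_append_true (w : List Bool) : trailOnes (w ++ [true]) = trailOnes w + 1 := by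
  simp [trailOnes]

theorem trailOnes_append_false (w : List Bool) : trailOnes (w ++ [false]) = 0 := by
  simp [trailOnes]

theorem trailOnes_append_false_cons_replicate (a : List Bool) (u : ℕ) :
    trailOnes (a ++ false :: List.replicate u true) = u := by
  simp [trailOnes]

theorem trailOnes_le_length (w : List Bool) : trailOnes w ≤ w.length :=
  (List.takeWhile_prefix _).length_le.trans_eq w.length_reverse

theorem eq_append_false_cons_replicate_trailOnes {w : List Bool} (hw : false ∈ w) :
    ∃ a, w = a ++ false :: List.replicate (trailOnes w) true := by
  induction w using List.reverseRecOn with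
  | nil => simp at hw
  | append_singleton v b ih =>
    cases b
    · exact ⟨v, by simp [trailOnes_append_false]⟩
    · obtain ⟨a, ha⟩ := ih (by simpa using hw)
      refine ⟨a, ?_⟩
      rw [trailOnes_append_true, List.replicate_succ']
      nth_rw 1 [ha]
      simp

theorem false_cons_replicate_suffix_iff {w : List Bool} {u : ℕ} :
    false :: List.replicate u true <:+ w ↔ false ∈ w ∧ trailOnes w = u := by
  constructor
  · rintro ⟨a, rfl⟩
    exact ⟨by simp, trailOnes_append_false_cons_replicate a u⟩
  · rintro ⟨hw, rfl⟩
    obtain ⟨a, ha⟩ := eq_append_false_cons_replicate_trailOnes hw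
    exact ⟨a, ha.symm⟩

theorem tail?_eq_some_iff {w t : List Bool} :
    tail? w = some t ↔ ∃ u, t = false :: List.replicate u true ∧ t <:+ w := by
  unfold tail?
  split_ifs with hw
  · simp only [Option.some.injEq]
    constructor
    · rintro rfl
      exact ⟨_, rfl, false_cons_replicate_suffix_iff.2 ⟨hw, rfl⟩⟩
    · rintro ⟨u, rfl, h⟩
      rw [(false_cons_replicate_suffix_iff.1 h).2]
  · simp only [false_iff, not_exists, not_and]
    rintro u rfl h
    exact hw (false_cons_replicate_suffix_iff.1 h).1

theorem getD_eq_true_of_length_sub_trailOnes_le {w : List Bool} {p : ℕ}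
    (h₁ : w.length - trailOnes w ≤ p) (h₂ : p < w.length) : w.getD p false = true := by
  have hq : w.length - 1 - p < (w.reverse.takeWhile (· == true)).length := by
    unfold trailOnes at h₁; omega
  have hmem := List.mem_takeWhile_imp (List.getElem_mem hq)
  rw [(List.takeWhile_prefix _).getElem, List.getElem_reverse] at hmem
  rw [List.getD_eq_getElem _ _ h₂]
  simpa [show w.length - 1 - (w.length - 1 - p) = p by omega] using hmem

theorem trailOnes_lt_length {w : List Bool} (hw : false ∈ w) : trailOnes w < w.length := by
  obtain ⟨a, ha⟩ := eq_append_false_cons_replicate_trailOnes hw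
  rw [ha, trailOnes_append_false_cons_replicate]
  simp only [List.length_append, List.length_cons, List.length_replicate]
  omega

theorem getD_length_sub_trailOnes_sub_one {w : List Bool} (hw : false ∈ w) :
    w.getD (w.length - trailOnes w - 1) false = false := by
  obtain ⟨a, ha⟩ := eq_append_false_cons_replicate_trailOnes hw
  generalize trailOnes w = u at ha
  subst ha
  simp [show a.length + (u + 1) - u - 1 = a.length by omega]

theorem length_applyT (w : List Bool) (i j : ℕ) : (applyT w i j).length = w.length := by
  simp [applyT]

theorem getD_applyT {w : List Bool} {i j : ℕ} (hi : i < w.length) (hj : j < w.length) (p : ℕ) :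
    (applyT w i j).getD p false =
      if p = j then true else if p = i then false else w.getD p false := by
  simp only [applyT, List.getD_eq_getElem?_getD, List.getElem?_set, List.length_set, hi, hj]
  split_ifs <;> first | rfl | omega

theorem okT.ne {w : List Bool} {i j : ℕ} (h : okT w i j) : i ≠ j := by
  rintro rfl
  exact Bool.false_ne_true (h.2.2.2.1.symm.trans h.2.2.1)

theorem okT.applyT {w : List Bool} {i j : ℕ} (h : okT w i j) : okT (applyT w i j) j i := by
  have hij := h.ne
  obtain ⟨hi, hj, hwi, hwj, hbet⟩ := h
  refine ⟨by simpa [length_applyT], by simpa [length_applyT], ?_, ?_, fun t h₁ h₂ => ?_⟩ <;>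
    rw [getD_applyT hi hj]
  · simp
  · simp [hij]
  · rw [if_neg (by omega), if_neg (by omega)]
    exact hbet t (by omega) (by omega)

theorem applyT_applyT {w : List Bool} {i j : ℕ} (h : okT w i j) :
    applyT (applyT w i j) j i = w := by
  obtain ⟨hi, hj, hwi, hwj, -⟩ := h
  rw [List.getD_eq_getElem?_getD] at hwi hwj
  apply List.ext_getElem?
  intro p
  simp only [applyT, List.getElem?_set, List.length_set]
  split_ifs <;> subst_vars <;> simp_all

theorem homTrans.symm {w w' : List Bool} (h : homTrans w w') : homTrans w' w := by
  obtain ⟨i, j, hok, rfl⟩ := h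
  exact ⟨j, i, hok.applyT, (applyT_applyT hok).symm⟩

theorem homTrans.length_eq {w w' : List Bool} (h : homTrans w w') : w'.length = w.length := by
  obtain ⟨i, j, -, rfl⟩ := h
  exact length_applyT w i j

theorem homTrans.false_mem {w w' : List Bool} (h : homTrans w w') : false ∈ w' := by
  obtain ⟨-, i, ⟨-, hi, -, hw'i, -⟩, -⟩ := h.symm
  rw [List.getD_eq_getElem _ _ hi] at hw'i
  exact hw'i ▸ List.getElem_mem hi

theorem homTrans.trailOnes_le_add_one {w w' : List Bool} (h : homTrans w w') (hw : false ∈ w) :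
    trailOnes w' ≤ trailOnes w + 1 := by
  obtain ⟨i, j, hok, rfl⟩ := h
  have hij := hok.ne
  obtain ⟨hi, hj, hwi, hwj, hbet⟩ := hok
  -- if `w'` ended in `trailOnes w + 2` ones, the last `0` of `w` would have to be position `j`,
  -- and the `1` of `w'` just before it would lie strictly between `i` and `j`
  by_contra! hlt
  have hu := trailOnes_lt_length hw
  have hu' := length_applyT w i j ▸ trailOnes_le_length (applyT w i j)
  have hone : ∀ p, w.length - (trailOnes w + 2) ≤ p → p < w.length →
      (if p = j then true else if p = i then false else w.getD p false) = true := by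
    intro p h₁ h₂
    rw [← getD_applyT hi hj]
    exact getD_eq_true_of_length_sub_trailOnes_le (by rw [length_applyT]; omega)
      (by rwa [length_applyT])
  set z := w.length - trailOnes w - 1
  have hz : w.getD z false = false := getD_length_sub_trailOnes_sub_one hw
  have hjz : j = z := by
    have := hone z (by omega) (by omega)
    split_ifs at this with h₁
    · exact h₁.symm
    · exact absurd (hz.symm.trans this) Bool.false_ne_true
  have hiz : i + 1 < z := by
    by_contra!
    have := hone i (by omega) hi
    rw [if_neg hij, if_pos rfl] at this
    exact Bool.false_ne_true this
  have := hone (z - 1) (by omega) (by omega)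
  rw [if_neg (by omega), if_neg (by omega), hbet (z - 1) (by omega) (by omega)] at this
  exact Bool.false_ne_true this

theorem homTrans.of_append_right {p p' t : List Bool} (h : homTrans (p ++ t) (p' ++ t)) :
    homTrans p p' := by
  have hlen : p'.length = p.length := by simpa using h.length_eq
  obtain ⟨i, j, hok, heq⟩ := h
  have hij := hok.ne
  obtain ⟨hi, hj, hwi, hwj, hbet⟩ := hok
  have hsame : ∀ q, p.length ≤ q →
      (applyT (p ++ t) i j).getD q false = (p ++ t).getD q false := by
    intro q hq
    rw [← heq, List.getD_append_right _ _ _ _ hq, List.getD_append_right _ _ _ _ (hlen ▸ hq),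
      hlen]
  have hip : i < p.length := by
    by_contra! hq
    have := hsame i hq
    rw [getD_applyT hi hj, if_neg hij, if_pos rfl, hwi] at this
    exact Bool.false_ne_true this
  have hjp : j < p.length := by
    by_contra! hq
    have := hsame j hq
    rw [getD_applyT hi hj, if_pos rfl, hwj] at this
    exact Bool.false_ne_true this.symm
  have happ : applyT (p ++ t) i j = applyT p i j ++ t := by
    simp [applyT, hip, hjp]
  refine ⟨i, j, ⟨hip, hjp, ?_, ?_, fun q h₁ h₂ => ?_⟩,
    List.append_cancel_right (heq.trans happ)⟩
  · rwa [List.getD_append _ _ _ _ hip] at hwi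
  · rwa [List.getD_append _ _ _ _ hjp] at hwj
  · rw [← List.getD_append _ t _ _ (by omega)]
    exact hbet q h₁ h₂

section UnitSteps

variable {g : ℕ → ℕ} {a b : ℕ}

theorem exists_eq_of_unit_steps
    (hstep : ∀ i, a ≤ i → i + 1 < b → g (i + 1) ≤ g i + 1 ∧ g i ≤ g (i + 1) + 1)
    {i k v : ℕ} (hai : a ≤ i) (hik : i ≤ k) (hkb : k < b)
    (hv₁ : min (g i) (g k) ≤ v) (hv₂ : v ≤ max (g i) (g k)) :
    ∃ j, i ≤ j ∧ j ≤ k ∧ g j = v := by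
  induction k, hik using Nat.le_induction with
  | base => exact ⟨i, le_rfl, le_rfl, by omega⟩
  | succ k hik ih =>
    by_cases hk : g (k + 1) = v
    · exact ⟨k + 1, by omega, le_rfl, hk⟩
    · have := hstep k (by omega) hkb
      obtain ⟨j, hij, hjk, hj⟩ := ih (by omega) (by omega) (by omega)
      exact ⟨j, hij, by omega, hj⟩

theorem min_le_and_le_max_of_unit_steps
    (hstep : ∀ i, a ≤ i → i + 1 < b → g (i + 1) ≤ g i + 1 ∧ g i ≤ g (i + 1) + 1)
    (hlevel : ∀ i j k, a ≤ i → i ≤ j → j ≤ k → k < b → g i = g k → g j = g i)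
    {i j k : ℕ} (hai : a ≤ i) (hij : i ≤ j) (hjk : j ≤ k) (hkb : k < b) :
    min (g i) (g k) ≤ g j ∧ g j ≤ max (g i) (g k) := by
  by_contra hout
  by_cases hi : min (g j) (g k) ≤ g i ∧ g i ≤ max (g j) (g k)
  · obtain ⟨c, hjc, hck, hc⟩ :=
      exists_eq_of_unit_steps hstep (by omega) hjk hkb hi.1 hi.2
    have := hlevel i j c hai hij hjc (by omega) hc.symm
    omega
  · obtain ⟨c, hic, hcj, hc⟩ :=
      exists_eq_of_unit_steps hstep hai hij (by omega) (v := g k) (by omega) (by omega)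
    have := hlevel c j k (by omega) hcj hjk hkb hc
    omega

theorem monotoneOn_or_antitoneOn_of_unit_steps
    (hstep : ∀ i, a ≤ i → i + 1 < b → g (i + 1) ≤ g i + 1 ∧ g i ≤ g (i + 1) + 1)
    (hlevel : ∀ i j k, a ≤ i → i ≤ j → j ≤ k → k < b → g i = g k → g j = g i) :
    MonotoneOn g (Set.Ico a b) ∨ AntitoneOn g (Set.Ico a b) := by
  have hbtw := @min_le_and_le_max_of_unit_steps g a b hstep hlevel
  rcases le_total (g a) (g (b - 1)) with h | h <;> [left; right] <;>
  · intro i hi j hj hij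
    simp only [Set.mem_Ico] at hi hj
    have := hbtw (i := a) (j := i) (k := b - 1) le_rfl hi.1 (by omega) (by omega)
    have := hbtw (i := i) (j := j) (k := b - 1) hi.1 hij (by omega) (by omega)
    omega

end UnitSteps

namespace List

variable {α : Type*} {P : α → Bool}

theorem filter_prefix_of_antitone {L : List α}
    (h : ∀ i j (hi : i < L.length) (hj : j < L.length), i ≤ j → P L[j] → P L[i]) :
    L.filter P <+: L := by
  induction L with
  | nil => simp
  | cons a L ih =>
    by_cases ha : P a
    · rw [filter_cons_of_pos ha, cons_prefix_cons]
      exact ⟨rfl, ih fun i j hi hj hij => h (i + 1) (j + 1) (by simpa) (by simpa) (by omega)⟩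
    · rw [filter_cons_of_neg ha, filter_eq_nil_iff.2 fun b hb hPb => ?_]
      · exact nil_prefix
      obtain ⟨m, hm, rfl⟩ := getElem_of_mem hb
      exact ha (h 0 (m + 1) (by simp) (by simpa) (by omega) hPb)

theorem filter_infix_of_convex {L : List α}
    (h : ∀ i j k (hi : i < L.length) (hj : j < L.length) (hk : k < L.length),
      i ≤ j → j ≤ k → P L[i] → P L[k] → P L[j]) :
    L.filter P <:+: L := by
  induction L with
  | nil => simp
  | cons a L ih =>
    by_cases ha : P a
    · rw [filter_cons_of_pos ha]
      refine (cons_prefix_cons.2 ⟨rfl, filter_prefix_of_antitone fun i j hi hj hij =>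
        h 0 (i + 1) (j + 1) (by simp) (by simpa) (by simpa) (by omega) (by omega) ha⟩).isInfix
    · rw [filter_cons_of_neg ha]
      exact infix_cons <| ih fun i j k hi hj hk hij hjk =>
        h (i + 1) (j + 1) (k + 1) (by simpa) (by simpa) (by simpa) (by omega) (by omega)

theorem take_length_sub_append {t w : List α} (h : t <:+ w) :
    w.take (w.length - t.length) ++ t = w := by
  obtain ⟨a, rfl⟩ := h
  simp

end List

theorem suffixPartitioned.of_infix {L B : List (List Bool)} (h : suffixPartitioned L)
    (hB : B <:+: L) : suffixPartitioned B := by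
  obtain ⟨l, r, rfl⟩ := hB
  intro s i j k hij hjk hk hsi hsk
  have hgetD : ∀ m < B.length, B.getD m [] = (l ++ B ++ r).getD (l.length + m) [] := by
    intro m hm
    rw [List.getD_append _ _ _ _ (by simp only [List.length_append]; omega),
      List.getD_append_right _ _ _ _ (by omega), Nat.add_sub_cancel_left]
  rw [hgetD i (by omega)] at hsi
  rw [hgetD k hk] at hsk
  rw [hgetD j (by omega)]
  exact h s _ _ _ (by omega) (by omega) (by simp only [List.length_append]; omega) hsi hsk

theorem suffixPartitioned.filter_infix {L : List (List Bool)} (h : suffixPartitioned L)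
    (t : List Bool) : L.filter (fun w => decide (t <:+ w)) <:+: L := by
  refine List.filter_infix_of_convex fun i j k hi hj hk hij hjk hti htk => ?_
  simp only [decide_eq_true_eq, ← List.getD_eq_getElem _ []] at hti htk ⊢
  exact h t i j k hij hjk hk hti htk

section DropSuffix

variable {B : List (List Bool)} {t : List Bool}

theorem suffixPartitioned.map_take (h : suffixPartitioned B) (hB : ∀ w ∈ B, t <:+ w) :
    suffixPartitioned (B.map fun w => w.take (w.length - t.length)) := by
  intro s i j k hij hjk hk hsi hsk
  rw [List.length_map] at hk
  have key : ∀ m < B.length,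
      (s <:+ (B.map fun w => w.take (w.length - t.length)).getD m [] ↔
        s ++ t <:+ B.getD m []) := by
    intro m hm
    rw [List.getD_eq_getElem _ _ (by simpa), List.getElem_map, List.getD_eq_getElem _ _ hm,
      ← List.suffix_append_self_iff (l₃ := t),
      List.take_length_sub_append (hB _ (List.getElem_mem hm))]
  rw [key i (by omega)] at hsi
  rw [key k hk] at hsk
  exact (key j (by omega)).2 (h _ i j k hij hjk hk hsi hsk)

theorem List.IsChain.map_take (h : B.IsChain homTrans) (hB : ∀ w ∈ B, t <:+ w) :
    (B.map fun w => w.take (w.length - t.length)).IsChain homTrans := by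
  rw [List.isChain_map]
  refine (List.IsChain.iff_mem.1 h).imp fun x y ⟨hx, hy, hxy⟩ => ?_
  apply homTrans.of_append_right (t := t)
  rwa [List.take_length_sub_append (hB x hx), List.take_length_sub_append (hB y hy)]

end DropSuffix

section TailPartition

variable {L : List (List Bool)}

theorem List.IsChain.homTrans_getD (h : L.IsChain homTrans) {i : ℕ} (hi : i + 1 < L.length) :
    homTrans (L.getD i []) (L.getD (i + 1) []) := by
  rw [List.getD_eq_getElem _ _ (by omega), List.getD_eq_getElem _ _ hi]
  exact List.isChain_iff_getElem.1 h i hi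

theorem List.IsChain.exists_false_mem_iff (h : L.IsChain homTrans) :
    ∃ a, ∀ i < L.length, false ∈ L.getD i [] ↔ a ≤ i := by
  have hpos : ∀ i, 0 < i → i < L.length → false ∈ L.getD i [] := fun i h₀ hi =>
    Nat.sub_add_cancel h₀ ▸ (h.homTrans_getD (i := i - 1) (by omega)).false_mem
  by_cases h₀ : false ∈ L.getD 0 []
  · refine ⟨0, fun i hi => iff_of_true ?_ i.zero_le⟩
    rcases i.eq_zero_or_pos with rfl | hi₀
    exacts [h₀, hpos i hi₀ hi]
  · refine ⟨1, fun i hi => ⟨fun hf => ?_, fun hi₁ => hpos i hi₁ hi⟩⟩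
    rcases i.eq_zero_or_pos with rfl | hi₀
    exacts [absurd hf h₀, hi₀]

theorem incTP_or_decTP (hgray : L.IsChain homTrans) (hsp : suffixPartitioned L) :
    incTP L ∨ decTP L := by
  obtain ⟨a, ha⟩ := hgray.exists_false_mem_iff
  have hstep : ∀ i, a ≤ i → i + 1 < L.length →
      trailOnes (L.getD (i + 1) []) ≤ trailOnes (L.getD i []) + 1 ∧
        trailOnes (L.getD i []) ≤ trailOnes (L.getD (i + 1) []) + 1 := by
    intro i hai hi
    have h := hgray.homTrans_getD hi
    exact ⟨h.trailOnes_le_add_one ((ha i (by omega)).2 hai),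
      h.symm.trailOnes_le_add_one h.false_mem⟩
  -- words with `u` trailing ones are exactly those with the suffix `0 1^u`
  have hlevel : ∀ i j k, a ≤ i → i ≤ j → j ≤ k → k < L.length →
      trailOnes (L.getD i []) = trailOnes (L.getD k []) →
        trailOnes (L.getD j []) = trailOnes (L.getD i []) := by
    intro i j k hai hij hjk hk hik
    have hj := hsp _ i j k hij hjk hk
      (false_cons_replicate_suffix_iff.2 ⟨(ha i (by omega)).2 hai, rfl⟩)
      (false_cons_replicate_suffix_iff.2 ⟨(ha k hk).2 (by omega), hik.symm⟩)
    exact (false_cons_replicate_suffix_iff.1 hj).2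
  have hmem : ∀ i < L.length, false ∈ L.getD i [] → i ∈ Set.Ico a L.length :=
    fun i hi hf => ⟨(ha i hi).1 hf, hi⟩
  refine (monotoneOn_or_antitoneOn_of_unit_steps hstep hlevel).imp ?_ ?_ <;>
    exact fun hmono i j hij hj hfi hfj => hmono (hmem i (by omega) hfi) (hmem j hj hfj) hij

end TailPartition

theorem filter_tail?_eq_some_eq_filter_suffix (L : List (List Bool)) (u : ℕ) :
    L.filter (fun w => decide (tail? w = some (false :: List.replicate u true))) =
      L.filter fun w => decide ((false :: List.replicate u true) <:+ w) :=
  List.filter_congr fun w _ => by simp [tail?_eq_some_iff]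

theorem homogeneous_suffixPartitioned_is_RTP_general (n : ℕ) (L : List (List Bool))
    (hlen : ∀ w ∈ L, w.length = n) (hgray : L.Chain' homTrans) (hsp : suffixPartitioned L) :
    RTP L := by
  induction n using Nat.strong_induction_on generalizing L with
  | _ n ih =>
  refine RTP.mk L (incTP_or_decTP hgray hsp) fun t => ?_
  by_cases hB : L.filter (fun w => decide (tail? w = some t)) = []
  · rw [hB]
    exact RTP.nil
  obtain ⟨w, hw⟩ := List.exists_mem_of_ne_nil _ hB
  obtain ⟨u, rfl, htw⟩ := tail?_eq_some_iff.1 (of_decide_eq_true (List.mem_filter.1 hw).2)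
  rw [filter_tail?_eq_some_eq_filter_suffix]
  have hinf := hsp.filter_infix (false :: List.replicate u true)
  have hsuf : ∀ v ∈ L.filter fun v => decide ((false :: List.replicate u true) <:+ v),
      (false :: List.replicate u true) <:+ v := fun v hv => by simpa using (List.mem_filter.1 hv).2
  have htn := hlen w (List.mem_filter.1 hw).1 ▸ htw.length_le
  refine ih (n - (u + 1)) ?_ _ ?_ ((hgray.infix hinf).map_take hsuf)
    ((hsp.of_infix hinf).map_take hsuf)
  · simp only [List.length_cons, List.length_replicate] at htn
    omega
  · simp only [List.mem_map, List.mem_filter]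
    rintro _ ⟨v, ⟨hv, -⟩, rfl⟩
    simp [hlen v hv]

theorem homogeneous_suffixPartitioned_is_RTP (n k : ℕ) (L : List (List Bool))
    (hlen : ∀ w ∈ L, w.length = n) (hwt : ∀ w ∈ L, w.count true = k)
    (hnodup : L.Nodup) (hgray : L.Chain' homTrans) (hsp : suffixPartitioned L) :
    RTP L :=
  homogeneous_suffixPartitioned_is_RTP_general n L hlen hgray hsp
end
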